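/- For any three outcome classes 𝓧, 𝓨, 𝓩 among {𝓛, 𝓡, 𝓝, 𝓟, 𝓣}, there exist scoring play games G ∈ 𝓧 and H ∈ 𝓨 such that G +_ℓ H ∈ 𝓩. -/

import Mathlib

inductive SGame : Type where
  | mk (left right : List SGame) (score : ℝ)

namespace SGame

def leftOpts : SGame → List SGame | mk L _ _ => L
def rightOpts : SGame → List SGame | mk _ R _ => R
def score : SGame → ℝ | mk _ _ s => s

mutual
  /-- Optimal final score when Left moves first. -/
  def leftScore : SGame → ℝ
    | mk [] _ s => s
    | mk (g :: L) _ _ => maxRight g L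
  termination_by G => sizeOf G
  decreasing_by all_goals (simp; try omega)
  def maxRight : SGame → List SGame → ℝ
    | g, [] => rightScore g
    | g, h :: t => max (rightScore g) (maxRight h t)
  termination_by g l => 1 + sizeOf g + sizeOf l
  decreasing_by all_goals (simp; try omega)
  /-- Optimal final score when Right moves first. -/
  def rightScore : SGame → ℝ
    | mk _ [] s => s
    | mk _ (g :: R) _ => minLeft g R
  termination_by G => sizeOf G
  decreasing_by all_goals (simp; try omega)
  def minLeft : SGame → List SGame → ℝ
    | g, [] => leftScore g
    | g, h :: t => min (leftScore g) (minLeft h t)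
  termination_by g l => 1 + sizeOf g + sizeOf l
  decreasing_by all_goals (simp; try omega)
end

/-- Long-rule disjunctive sum. -/
def sum : SGame → SGame → SGame
  | mk L1 R1 s1, mk L2 R2 s2 =>
    mk ((L1.attach.map fun g => sum g.1 (mk L2 R2 s2)) ++
        (L2.attach.map fun h => sum (mk L1 R1 s1) h.1))
       ((R1.attach.map fun g => sum g.1 (mk L2 R2 s2)) ++
        (R2.attach.map fun h => sum (mk L1 R1 s1) h.1))
       (s1 + s2)
termination_by G H => sizeOf G + sizeOf H
decreasing_by
  all_goals simp
  · have := List.sizeOf_lt_of_mem g.2; omega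
  · have := List.sizeOf_lt_of_mem h.2; omega
  · have := List.sizeOf_lt_of_mem g.2; omega
  · have := List.sizeOf_lt_of_mem h.2; omega

end SGame

namespace SGame

/-- The game `{.|0|.}`. -/
def zero : SGame := mk [] [] 0

/-- Negation: `-G = {-G^R | -G^S | -G^L}`. -/
def neg : SGame → SGame
  | mk L R s =>
    mk (R.attach.map fun g => neg g.1) (L.attach.map fun g => neg g.1) (-s)
termination_by G => sizeOf G
decreasing_by
  all_goals (have := List.sizeOf_lt_of_mem g.2; simp; omega)

/-- Identity of game trees (options regarded as sets). -/
def Ident : SGame → SGame → Prop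
  | mk L1 R1 s1, mk L2 R2 s2 =>
    s1 = s2 ∧
    (∀ g ∈ L1.attach, ∃ h ∈ L2.attach, Ident g.1 h.1) ∧
    (∀ h ∈ L2.attach, ∃ g ∈ L1.attach, Ident g.1 h.1) ∧
    (∀ g ∈ R1.attach, ∃ h ∈ R2.attach, Ident g.1 h.1) ∧
    (∀ h ∈ R2.attach, ∃ g ∈ R1.attach, Ident g.1 h.1)
termination_by G H => sizeOf G + sizeOf H
decreasing_by
  all_goals
    (have := List.sizeOf_lt_of_mem g.2; have := List.sizeOf_lt_of_mem h.2
     simp; omega)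

inductive Outcome : Type where
  | L | R | N | P | T
deriving DecidableEq

/-- The outcome class of a game, determined by the signs of its final scores. -/
noncomputable def outcome (G : SGame) : Outcome :=
  if 0 < G.leftScore then
    (if 0 < G.rightScore then .L else if G.rightScore = 0 then .L else .N)
  else if G.leftScore = 0 then
    (if 0 < G.rightScore then .L else if G.rightScore = 0 then .T else .R)
  else
    (if 0 < G.rightScore then .P else .R)

/-- `G ≥ H`. -/
def Ge (G H : SGame) : Prop :=
  ∀ X : SGame,
    (0 ≤ (H.sum X).leftScore → 0 ≤ (G.sum X).leftScore) ∧
    (0 ≤ (H.sum X).rightScore → 0 ≤ (G.sum X).rightScore) ∧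
    (0 < (H.sum X).leftScore → 0 < (G.sum X).leftScore) ∧
    (0 < (H.sum X).rightScore → 0 < (G.sum X).rightScore)

/-- `G ≤ H`. -/
def Le (G H : SGame) : Prop :=
  ∀ X : SGame,
    ((H.sum X).leftScore ≤ 0 → (G.sum X).leftScore ≤ 0) ∧
    ((H.sum X).rightScore ≤ 0 → (G.sum X).rightScore ≤ 0) ∧
    ((H.sum X).leftScore < 0 → (G.sum X).leftScore < 0) ∧
    ((H.sum X).rightScore < 0 → (G.sum X).rightScore < 0)

/-- Game equality: same outcome in every disjunctive-sum context. -/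
def gameEq (G H : SGame) : Prop :=
  ∀ X : SGame, (G.sum X).outcome = (H.sum X).outcome

end SGame

namespace SGame

/-- Every score in the game tree of `G` satisfies `p`. -/
def AllScores (p : ℝ → Prop) : SGame → Prop
  | mk L R s =>
    p s ∧ (∀ g ∈ L.attach, AllScores p g.1) ∧ (∀ g ∈ R.attach, AllScores p g.1)
termination_by G => sizeOf G
decreasing_by all_goals (have := List.sizeOf_lt_of_mem g.2; simp; omega)

/-- `G ≡ H`: identical underlying game trees, with equal scores at all
termination vertices (vertices at which at least one player has no option,
i.e. where the play of some disjunctive sum can end). -/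
def Equiv : SGame → SGame → Prop
  | mk L1 R1 s1, mk L2 R2 s2 =>
    ((L1 = [] ∨ R1 = []) → s1 = s2) ∧
    (∀ g ∈ L1.attach, ∃ h ∈ L2.attach, Equiv g.1 h.1) ∧
    (∀ h ∈ L2.attach, ∃ g ∈ L1.attach, Equiv g.1 h.1) ∧
    (∀ g ∈ R1.attach, ∃ h ∈ R2.attach, Equiv g.1 h.1) ∧
    (∀ h ∈ R2.attach, ∃ g ∈ R1.attach, Equiv g.1 h.1)
termination_by G H => sizeOf G + sizeOf H
decreasing_by
  all_goals
    (have := List.sizeOf_lt_of_mem g.2; have := List.sizeOf_lt_of_mem h.2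
     simp; omega)

/-- `G` is in canonical form: hereditarily, no dominated and no reversible options. -/
def Canonical : SGame → Prop
  | mk L R s =>
    (∀ A ∈ L, ∀ B ∈ L, A ≠ B → ¬ Ge A B) ∧
    (∀ D ∈ R, ∀ E ∈ R, D ≠ E → ¬ Le D E) ∧
    (∀ A ∈ L, ∀ Ar ∈ A.rightOpts, ¬ Le Ar (mk L R s)) ∧
    (∀ D ∈ R, ∀ Dl ∈ D.leftOpts, ¬ Ge Dl (mk L R s)) ∧
    (∀ g ∈ L.attach, Canonical g.1) ∧ (∀ g ∈ R.attach, Canonical g.1)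
termination_by G => sizeOf G
decreasing_by all_goals (have := List.sizeOf_lt_of_mem g.2; simp; omega)

/-- One reduction step: removing a dominated option or bypassing a reversible
option, at the root or in some subposition. -/
inductive Step : SGame → SGame → Prop where
  | domL {L1 L2 : List SGame} {R : List SGame} {s : ℝ} {B : SGame} (A : SGame)
      (hA : A ∈ L1 ++ L2) (h : Ge A B) :
      Step (mk (L1 ++ B :: L2) R s) (mk (L1 ++ L2) R s)
  | domR {R1 R2 : List SGame} {L : List SGame} {s : ℝ} {E : SGame} (D : SGame)
      (hD : D ∈ R1 ++ R2) (h : Le D E) :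
      Step (mk L (R1 ++ E :: R2) s) (mk L (R1 ++ R2) s)
  | revL {L1 L2 : List SGame} {R : List SGame} {s : ℝ} {A Ar : SGame}
      (hAr : Ar ∈ A.rightOpts) (h : Le Ar (mk (L1 ++ A :: L2) R s)) :
      Step (mk (L1 ++ A :: L2) R s) (mk (L1 ++ Ar.leftOpts ++ L2) R s)
  | revR {R1 R2 : List SGame} {L : List SGame} {s : ℝ} {D Dl : SGame}
      (hDl : Dl ∈ D.leftOpts) (h : Ge Dl (mk L (R1 ++ D :: R2) s)) :
      Step (mk L (R1 ++ D :: R2) s) (mk L (R1 ++ Dl.rightOpts ++ R2) s)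
  | congL {g g' : SGame} {L1 L2 R : List SGame} {s : ℝ} (h : Step g g') :
      Step (mk (L1 ++ g :: L2) R s) (mk (L1 ++ g' :: L2) R s)
  | congR {g g' : SGame} {L R1 R2 : List SGame} {s : ℝ} (h : Step g g') :
      Step (mk L (R1 ++ g :: R2) s) (mk L (R1 ++ g' :: R2) s)

end SGame

/-!
The final scores of `G +ℓ H` are decided at the terminal positions deep inside `G` and `H`,
whereas the outcome classes of `G` and `H` are decided by the scores at or next to the root.
For `G = {{{d|c|e}|b|.}|a|.}` and `H = {.|f|{.|g|h}}` the only lines of play give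
`G` the final scores `(b, a)`, `H` the scores `(f, g)` and `G +ℓ H` the scores
`(min (e + g) (d + h), e + h)`; solving for `e`, `h`, `d` realises any three pairs of scores,
hence any three outcome classes.
-/

namespace SGame

def terminal (s : ℝ) : SGame := mk [] [] s

def leftTower (a b c d e : ℝ) : SGame :=
  mk [mk [mk [terminal d] [terminal e] c] [] b] [] a

def rightTower (f g h : ℝ) : SGame :=
  mk [] [mk [] [terminal h] g] f

section Towers

variable (a b c d e f g h : ℝ)

@[simp] lemma leftScore_leftTower : (leftTower a b c d e).leftScore = b := by
  simp [leftTower, terminal, leftScore, rightScore, maxRight]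

@[simp] lemma rightScore_leftTower : (leftTower a b c d e).rightScore = a := by
  simp [leftTower, rightScore]

@[simp] lemma leftScore_rightTower : (rightTower f g h).leftScore = f := by
  simp [rightTower, leftScore]

@[simp] lemma rightScore_rightTower : (rightTower f g h).rightScore = g := by
  simp [rightTower, terminal, leftScore, rightScore, minLeft]

lemma leftScore_sum_leftTower_rightTower :
    ((leftTower a b c d e).sum (rightTower f g h)).leftScore = min (e + g) (d + h) := by
  simp [leftTower, rightTower, terminal, sum, leftScore, rightScore, maxRight, minLeft]

lemma rightScore_sum_leftTower_rightTower :
    ((leftTower a b c d e).sum (rightTower f g h)).rightScore = e + h := by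
  simp [leftTower, rightTower, terminal, sum, leftScore, rightScore, maxRight, minLeft]

end Towers

theorem exists_sum_with_scores (lG rG lH rH l r : ℝ) :
    ∃ G H : SGame, G.leftScore = lG ∧ G.rightScore = rG ∧
      H.leftScore = lH ∧ H.rightScore = rH ∧
      (G.sum H).leftScore = l ∧ (G.sum H).rightScore = r := by
  refine ⟨leftTower rG lG 0 (l - (r - (l - rH))) (l - rH), rightTower lH rH (r - (l - rH)),
    by simp, by simp, by simp, by simp, ?_, ?_⟩
  · simp [leftScore_sum_leftTower_rightTower]
  · simp [rightScore_sum_leftTower_rightTower]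

namespace Outcome

def leftRep : Outcome → ℝ
  | L => 1 | R => -1 | N => 1 | P => -1 | T => 0

def rightRep : Outcome → ℝ
  | L => 1 | R => -1 | N => -1 | P => 1 | T => 0

end Outcome

lemma outcome_eq_of_scores {G : SGame} {O : Outcome}
    (hl : G.leftScore = O.leftRep) (hr : G.rightScore = O.rightRep) : G.outcome = O := by
  cases O <;> norm_num [outcome, hl, hr, Outcome.leftRep, Outcome.rightRep]

end SGame

/-- For any three outcome classes `𝓧, 𝓨, 𝓩` there are games `G ∈ 𝓧` and
`H ∈ 𝓨` with `G +ℓ H ∈ 𝓩`. -/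
theorem outcome_classes_mix (X Y Z : SGame.Outcome) :
    ∃ G H : SGame, G.outcome = X ∧ H.outcome = Y ∧ (G.sum H).outcome = Z := by
  obtain ⟨G, H, hGl, hGr, hHl, hHr, hl, hr⟩ :=
    SGame.exists_sum_with_scores X.leftRep X.rightRep Y.leftRep Y.rightRep Z.leftRep Z.rightRep
  exact ⟨G, H, SGame.outcome_eq_of_scores hGl hGr, SGame.outcome_eq_of_scores hHl hHr,
    SGame.outcome_eq_of_scores hl hr⟩
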